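/- Let c : Fin k → (Fin 2 → ℤ) × (Fin 2 → ℤ), k ≥ 1, be a trajectory of k configurations in the 9-successor racetrack model on ℤ² with v 0 = 0 and v (k-1) = 0. Then for each coordinate j : Fin 2, the number of vectors of the trajectory satisfies k - 1 ≥ ⌈2·√(|p (k-1) j - p 0 j|)⌉. (The cost of a rest-to-rest trajectory is at least the maximum, over the dimensions, of the optimal unidimensional cost of its projected displacement.) -/
import Mathlib

lemma sum_min_le (n : ℕ) :
    4 * ∑ t ∈ Finset.range (n+1), min t (n - t) ≤ n^2 := by
  induction n using Nat.strong_induction_on with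
  | _ n ih =>
    match n with
    | 0 => simp
    | 1 => decide
    | (m+2) =>
      have key : ∑ t ∈ Finset.range (m+2+1), min t (m+2-t)
          = (∑ t ∈ Finset.range (m+1), min t (m-t)) + (m+1) := by
        rw [Finset.sum_range_succ', Finset.sum_range_succ]
        have h : ∀ s ∈ Finset.range (m+1), min (s+1) (m+2-(s+1)) = min s (m-s) + 1 := by
          intro s hs
          simp only [Finset.mem_range] at hs
          omega
        rw [Finset.sum_congr rfl h, Finset.sum_add_distrib]
        simp
      have := ih m (by omega)
      have hsq : (m+2)^2 = m^2 + 4*m + 4 := by ring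
      omega

/-- A trajectory of `k` configurations in the racetrack model on `ℤ^m`
(for `m = 2` this is the 9-successor model on `ℤ²`). -/
def IsTrajectory (m k : ℕ) (c : Fin k → (Fin m → ℤ) × (Fin m → ℤ)) : Prop :=
  ∀ (t : ℕ) (h : t + 1 < k),
    (c ⟨t + 1, h⟩).1 = (c ⟨t, by omega⟩).1 + (c ⟨t + 1, h⟩).2 ∧
    ∀ j : Fin m, |(c ⟨t + 1, h⟩).2 j - (c ⟨t, by omega⟩).2 j| ≤ 1

/-- The number of vectors of a rest-to-rest trajectory on `ℤ²` is at least the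
optimal unidimensional cost `⌈2√(displacement)⌉` in each dimension. -/
theorem vtsp_projection_lower_bound (k : ℕ) (hk : 1 ≤ k)
    (c : Fin k → (Fin 2 → ℤ) × (Fin 2 → ℤ)) (hc : IsTrajectory 2 k c)
    (h0 : (c ⟨0, hk⟩).2 = 0) (h1 : (c ⟨k - 1, by omega⟩).2 = 0) (j : Fin 2) :
    ⌈2 * Real.sqrt ((|(c ⟨k - 1, by omega⟩).1 j - (c ⟨0, hk⟩).1 j| : ℤ) : ℝ)⌉₊
      ≤ k - 1 := by
  set n := k - 1 with hn
  have hnk : n + 1 = k := by omega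
  set V : ℕ → ℤ := fun t => if h : t < k then (c ⟨t, h⟩).2 j else 0 with hV
  set P : ℕ → ℤ := fun t => if h : t < k then (c ⟨t, h⟩).1 j else 0 with hP
  have hV0 : V 0 = 0 := by
    simp only [hV]
    rw [dif_pos (show 0 < k by omega)]
    exact congrFun h0 j
  have hVn : V n = 0 := by
    simp only [hV]
    rw [dif_pos (show n < k by omega)]
    exact congrFun h1 j
  have hstep : ∀ t, t + 1 < k →
      P (t+1) = P t + V (t+1) ∧ |V (t+1) - V t| ≤ 1 := by
    intro t ht
    obtain ⟨he, hv⟩ := hc t ht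
    constructor
    · simp only [hP, hV]
      rw [dif_pos ht, dif_pos ht, dif_pos (show t < k by omega)]
      exact congrFun he j
    · simp only [hV]
      rw [dif_pos ht, dif_pos (show t < k by omega)]
      exact hv j
  -- forward bound
  have hfwd : ∀ t, t ≤ n → |V t| ≤ (t : ℤ) := by
    intro t
    induction t with
    | zero => intro _; simp [hV0]
    | succ t ihh =>
      intro ht
      have h1 := (hstep t (by omega)).2
      have h2 := ihh (by omega)
      have : |V (t+1)| ≤ |V t| + 1 := by
        calc |V (t+1)| = |(V (t+1) - V t) + V t| := by ring_nf
          _ ≤ |V (t+1) - V t| + |V t| := abs_add_le _ _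
          _ ≤ |V t| + 1 := by omega
      push_cast
      omega
  -- backward bound
  have hbwd : ∀ s, s ≤ n → |V (n - s)| ≤ (s : ℤ) := by
    intro s
    induction s with
    | zero => intro _; simp [hVn]
    | succ s ihh =>
      intro hs
      have h2 := ihh (by omega)
      have heq : n - (s+1) + 1 = n - s := by omega
      have h1 := (hstep (n - (s+1)) (by omega)).2
      rw [heq] at h1
      have : |V (n - (s+1))| ≤ |V (n - s)| + 1 := by
        calc |V (n - (s+1))| = |-(V (n-s) - V (n-(s+1))) + V (n-s)| := by ring_nf
          _ ≤ |-(V (n-s) - V (n-(s+1)))| + |V (n-s)| := abs_add_le _ _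
          _ = |V (n-s) - V (n-(s+1))| + |V (n-s)| := by rw [abs_neg]
          _ ≤ |V (n-s)| + 1 := by omega
      push_cast
      omega
  have hmin : ∀ t ∈ Finset.range (n+1), |V t| ≤ ((min t (n - t) : ℕ) : ℤ) := by
    intro t ht
    simp only [Finset.mem_range] at ht
    have h1 := hfwd t (by omega)
    have h2 := hbwd (n - t) (by omega)
    rw [show n - (n - t) = t by omega] at h2
    push_cast
    omega
  -- telescoping
  have htel : ∀ t, t ≤ n → P t = P 0 + ∑ s ∈ Finset.range t, V (s+1) := by
    intro t
    induction t with
    | zero => intro _; simp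
    | succ t ihh =>
      intro ht
      rw [Finset.sum_range_succ, ← add_assoc, ← ihh (by omega),
        (hstep t (by omega)).1]
  have hsum : P n - P 0 = ∑ t ∈ Finset.range (n+1), V t := by
    rw [htel n le_rfl, Finset.sum_range_succ' V n, hV0]
    ring
  have habs : |P n - P 0| ≤ ((∑ t ∈ Finset.range (n+1), min t (n - t) : ℕ) : ℤ) := by
    rw [hsum]
    push_cast
    exact le_trans (Finset.abs_sum_le_sum_abs _ _)
      (Finset.sum_le_sum (by intro i hi; have := hmin i hi; push_cast at this ⊢; omega))
  have hbound : 4 * |P n - P 0| ≤ (n : ℤ)^2 := by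
    have h2 : 4 * ((∑ t ∈ Finset.range (n+1), min t (n - t) : ℕ) : ℤ) ≤ (n : ℤ)^2 := by
      exact_mod_cast sum_min_le n
    linarith [habs]
  -- identify P with the positions in the goal
  have hPn : (c ⟨k - 1, by omega⟩).1 j = P n := by
    simp only [hP]
    rw [dif_pos (show n < k by omega)]
  have hP0 : (c ⟨0, hk⟩).1 j = P 0 := by
    simp only [hP]
    rw [dif_pos (show 0 < k by omega)]
  rw [hPn, hP0]
  rw [Nat.ceil_le]
  have hD : (0:ℝ) ≤ (|P n - P 0| : ℤ) := by positivity
  have hle : ((|P n - P 0| : ℤ) : ℝ) ≤ ((n:ℝ)/2)^2 := by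
    have h4 : (4:ℝ) * |((P n : ℤ) : ℝ) - ((P 0 : ℤ) : ℝ)| ≤ (n:ℝ)^2 := by
      exact_mod_cast hbound
    push_cast
    nlinarith
  calc 2 * Real.sqrt ((|P n - P 0| : ℤ) : ℝ)
      ≤ 2 * Real.sqrt (((n:ℝ)/2)^2) := by
        have := Real.sqrt_le_sqrt hle
        linarith
    _ = 2 * ((n:ℝ)/2) := by rw [Real.sqrt_sq (by positivity)]
    _ = ((n : ℕ) : ℝ) := by ring
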